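/- Assume (J) and (F2'), suppose c_β ∈ ℝ for every 0 < β ≤ +∞, and let the maps η_β satisfy (η2)_β. Then: (a) if β_n → +∞, x_n ∈ K_{β_n} for every n, and x_n → x in M, then x ∈ C_*; that is, limsup_{β→+∞} K_β ⊆ C_*. (b) For every x ∈ C_* one has J_∞(x) ≤ c_∞. -/

import Mathlib

/-!
The levels `c_β` increase with `β` and stay below `c_∞`; the point is that they converge to
`c_∞`. Otherwise some `a' < c_∞` bounds every `c_n`, so there are `A_n ∈ F` on which
`J_n < a'`. By (F2') their limsup lies in `F`, and there lower semicontinuity and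
monotonicity in `β` give `J_β(x) ≤ liminf J_{n_k}(y_k) ≤ a'` for every `β`, i.e.
`J_∞ ≤ a' < c_∞` on a member of `F`, which is absurd. Part (a) follows because `J_β` and
`J_β ∘ η_β` both equal `c_β` on `K_β`, and part (b) is the same liminf estimate.
-/

open Filter Topology

/-- Kuratowski limit superior of a sequence of subsets of a metric space. -/
def SeqLimsup {X : Type*} [MetricSpace X] (A : ℕ → Set X) : Set X :=
  {x | ∃ φ : ℕ → ℕ, StrictMono φ ∧
    ∃ y : ℕ → X, (∀ n, y n ∈ A (φ n)) ∧ Tendsto y atTop (𝓝 x)}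

section

variable {X : Type*}

noncomputable def minimaxLevel (F : Set (Set X)) (f : X → EReal) : EReal :=
  ⨅ A ∈ F, ⨆ x ∈ A, f x

noncomputable def supFunctional (J : ℝ → X → EReal) (x : X) : EReal :=
  ⨆ β : ℝ, ⨆ _ : 0 < β, J β x

section MinimaxLevel

variable {F : Set (Set X)} {f g : X → EReal}

theorem minimaxLevel_mono (h : f ≤ g) : minimaxLevel F f ≤ minimaxLevel F g :=
  iInf₂_mono fun _ _ => iSup₂_mono fun x _ => h x

theorem minimaxLevel_le_iSup {A : Set X} (hA : A ∈ F) :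
    minimaxLevel F f ≤ ⨆ x ∈ A, f x :=
  iInf₂_le A hA

theorem minimaxLevel_lt_iff {a : EReal} :
    minimaxLevel F f < a ↔ ∃ A ∈ F, ⨆ x ∈ A, f x < a := by
  simp only [minimaxLevel, iInf_lt_iff, exists_prop]

end MinimaxLevel

theorem le_supFunctional {J : ℝ → X → EReal} {β : ℝ} (hβ : 0 < β) (x : X) :
    J β x ≤ supFunctional J x :=
  le_iSup₂ (f := fun β (_ : 0 < β) => J β x) β hβ

theorem lt_supFunctional_iff {J : ℝ → X → EReal} {x : X} {a : EReal} :
    a < supFunctional J x ↔ ∃ β, 0 < β ∧ a < J β x := by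
  simp only [supFunctional, lt_iSup_iff, exists_prop]

theorem le_liminf_of_tendsto_atTop [TopologicalSpace X] {J : ℝ → X → EReal} {β : ℝ}
    {x : X} (hlsc : LowerSemicontinuousAt (J β) x)
    (hmono : ∀ β', β ≤ β' → ∀ x, J β x ≤ J β' x) {b : ℕ → ℝ} (hb : Tendsto b atTop atTop)
    {u : ℕ → X} (hu : Tendsto u atTop (𝓝 x)) :
    J β x ≤ liminf (fun n => J (b n) (u n)) atTop := by
  refine le_of_forall_lt_imp_le_of_dense fun a ha => le_liminf_of_le (by isBoundedDefault) ?_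
  filter_upwards [hu.eventually (hlsc a ha), hb.eventually_ge_atTop β] with n hau hbn
  exact hau.le.trans (hmono _ hbn _)

section Levels

variable {F : Set (Set X)} {J : ℝ → X → EReal}

theorem supFunctional_le_of_tendsto [TopologicalSpace X] {x : X}
    (hlsc : ∀ β, 0 < β → LowerSemicontinuousAt (J β) x)
    (hmono : ∀ β₁ β₂, 0 < β₁ → β₁ ≤ β₂ → ∀ x, J β₁ x ≤ J β₂ x)
    {b : ℕ → ℝ} (hb : Tendsto b atTop atTop) {u : ℕ → X}
    (hu : Tendsto u atTop (𝓝 x)) {c : EReal}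
    (hJu : Tendsto (fun n => J (b n) (u n)) atTop (𝓝 c)) :
    supFunctional J x ≤ c :=
  iSup₂_le fun β hβ =>
    hJu.liminf_eq ▸ le_liminf_of_tendsto_atTop (hlsc β hβ) (hmono β · hβ) hb hu

theorem exists_lt_minimaxLevel [MetricSpace X]
    (hlsc : ∀ β, 0 < β → LowerSemicontinuous (J β))
    (hmono : ∀ β₁ β₂, 0 < β₁ → β₁ ≤ β₂ → ∀ x, J β₁ x ≤ J β₂ x) {L : EReal}
    (hF : ∀ A : ℕ → Set X, (∀ n, A n ∈ F) →
      (∃ β, 0 < β ∧ ∀ n, ∀ x ∈ A n, J β x ≤ L) → SeqLimsup A ∈ F)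
    (hL : minimaxLevel F (supFunctional J) ≤ L) {a : EReal}
    (ha : a < minimaxLevel F (supFunctional J)) :
    ∃ β, 0 < β ∧ a < minimaxLevel F (J β) := by
  by_contra! hle
  obtain ⟨a', haa', ha'⟩ := exists_between ha
  have hA : ∀ n : ℕ, ∃ A ∈ F, ⨆ x ∈ A, J (n + 1) x < a' := fun n =>
    minimaxLevel_lt_iff.1 ((hle _ n.cast_add_one_pos).trans_lt haa')
  choose A hAF hAJ using hA
  have hAJ' : ∀ n, ∀ x ∈ A n, J (n + 1) x < a' := fun n x hx =>
    (le_biSup (fun y => J (n + 1) y) hx).trans_lt (hAJ n)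
  have hS : SeqLimsup A ∈ F := hF A hAF ⟨1, one_pos, fun n x hx =>
    (hmono 1 (n + 1) one_pos (by simp) x).trans ((hAJ' n x hx).le.trans (ha'.le.trans hL))⟩
  obtain ⟨x, ⟨φ, hφ, y, hyA, hyx⟩, hx⟩ :=
    lt_biSup_iff.1 (ha'.trans_le (minimaxLevel_le_iSup hS))
  obtain ⟨β, hβ, hβx⟩ := lt_supFunctional_iff.1 hx
  have hφ_top : Tendsto (fun n => (φ n : ℝ) + 1) atTop atTop :=
    tendsto_atTop_add_const_right _ 1
      (tendsto_natCast_atTop_atTop.comp hφ.tendsto_atTop)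
  have hliminf : liminf (fun n => J ((φ n : ℝ) + 1) (y n)) atTop ≤ a' :=
    liminf_le_of_frequently_le' (Frequently.of_forall fun n => (hAJ' _ _ (hyA n)).le)
  have hJx : J β x ≤ a' :=
    (le_liminf_of_tendsto_atTop (hlsc β hβ x) (hmono β · hβ) hφ_top hyx).trans hliminf
  exact (hβx.trans_le hJx).false

theorem tendsto_minimaxLevel [MetricSpace X]
    (hlsc : ∀ β, 0 < β → LowerSemicontinuous (J β))
    (hmono : ∀ β₁ β₂, 0 < β₁ → β₁ ≤ β₂ → ∀ x, J β₁ x ≤ J β₂ x) {L : EReal}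
    (hF : ∀ A : ℕ → Set X, (∀ n, A n ∈ F) →
      (∃ β, 0 < β ∧ ∀ n, ∀ x ∈ A n, J β x ≤ L) → SeqLimsup A ∈ F)
    (hL : minimaxLevel F (supFunctional J) ≤ L) {b : ℕ → ℝ} (hb : Tendsto b atTop atTop) :
    Tendsto (fun n => minimaxLevel F (J (b n))) atTop
      (𝓝 (minimaxLevel F (supFunctional J))) := by
  refine tendsto_order.2 ⟨fun a ha => ?_, fun a ha => ?_⟩
  · obtain ⟨β, hβ, haβ⟩ := exists_lt_minimaxLevel hlsc hmono hF hL ha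
    filter_upwards [hb.eventually_ge_atTop β] with n hn
    exact haβ.trans_le (minimaxLevel_mono (hmono β (b n) hβ hn))
  · filter_upwards [hb.eventually_gt_atTop 0] with n hn
    exact (minimaxLevel_mono (le_supFunctional hn)).trans_lt ha

end Levels

end

theorem limsup_Kbeta_subset_Cstar_and_Cstar_below_cinf_general {X : Type*} [MetricSpace X]
    (F : Set (Set X)) (J : ℝ → X → EReal)
    -- each J_β, β > 0, is lower semicontinuous
    (hlsc : ∀ β : ℝ, 0 < β → LowerSemicontinuous (J β))
    -- assumption (J): monotonicity in β on (0, +∞)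
    (hmono : ∀ β₁ β₂ : ℝ, 0 < β₁ → β₁ ≤ β₂ → ∀ x, J β₁ x ≤ J β₂ x)
    -- the limit functional J_∞
    (Jinf : X → EReal) (hJinf : ∀ x, Jinf x = ⨆ β : ℝ, ⨆ _ : 0 < β, J β x)
    -- the minimax levels c_β, 0 < β < +∞, and c_∞; all of them real
    (cβ : ℝ → EReal) (hcβ : ∀ β : ℝ, cβ β = ⨅ A ∈ F, ⨆ x ∈ A, J β x)
    (cinf : ℝ) (hcinf : (⨅ A ∈ F, ⨆ x ∈ A, Jinf x) = (cinf : EReal))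
    -- assumption (F2')
    (hF2' : ∀ A : ℕ → Set X, (∀ n, A n ∈ F) →
      (∃ β : ℝ, 0 < β ∧ ∀ n, ∀ x ∈ A n, J β x ≤ (cinf : EReal) + 1) →
      SeqLimsup A ∈ F)
    -- the deformations η_β, 0 < β < +∞, mapping M_β^{c_∞+1} into itself
    (η : ℝ → X → X)
    -- the critical sets K_β, 0 < β < +∞
    (K : ℝ → Set X)
    (hKdef : ∀ β : ℝ, K β = {x | J β x = cβ β ∧ J β (η β x) = cβ β})
    -- the set C_*
    (Cstar : Set X)
    (hCstar : Cstar = {x | ∃ u : ℕ → X, ∃ b : ℕ → ℝ,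
      (∀ n, 0 < b n) ∧ Tendsto b atTop atTop ∧ Tendsto u atTop (𝓝 x) ∧
      Tendsto (fun n => J (b n) (u n)) atTop (𝓝 (cinf : EReal)) ∧
      Tendsto (fun n => J (b n) (η (b n) (u n))) atTop (𝓝 (cinf : EReal))}) :
    (∀ b : ℕ → ℝ, (∀ n, 0 < b n) → Tendsto b atTop atTop →
      ∀ u : ℕ → X, (∀ n, u n ∈ K (b n)) →
      ∀ x : X, Tendsto u atTop (𝓝 x) → x ∈ Cstar) ∧
    (∀ x ∈ Cstar, Jinf x ≤ (cinf : EReal)) := by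
  obtain rfl : Jinf = supFunctional J := funext hJinf
  have hL : minimaxLevel F (supFunctional J) ≤ (cinf : EReal) + 1 := by
    rw [minimaxLevel, hcinf]
    exact_mod_cast (lt_add_one cinf).le
  have hc : ∀ b : ℕ → ℝ, Tendsto b atTop atTop →
      Tendsto (fun n => cβ (b n)) atTop (𝓝 (cinf : EReal)) := fun b hb => by
    simpa only [hcβ, ← hcinf, minimaxLevel] using tendsto_minimaxLevel hlsc hmono hF2' hL hb
  refine ⟨fun b hbpos hb u hu x hux => ?_, fun x hx => ?_⟩
  · simp only [hKdef, Set.mem_ofPred_eq] at hu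
    rw [hCstar]
    exact ⟨u, b, hbpos, hb, hux, (hc b hb).congr fun n => (hu n).1.symm,
      (hc b hb).congr fun n => (hu n).2.symm⟩
  · rw [hCstar] at hx
    obtain ⟨u, b, -, hb, hux, hJu, -⟩ := hx
    exact supFunctional_le_of_tendsto (fun β hβ => hlsc β hβ x) hmono hb hux hJu

/-- Assume (J) and (F2'), suppose the minimax levels are real, and let the maps
`η_β` satisfy `(η2)_β`. Then:
(a) if `β_n → +∞`, `x_n ∈ K_{β_n}` for every `n`, and `x_n → x` in `M`, then
`x ∈ C_*`; that is, `limsup_{β→+∞} K_β ⊆ C_*`.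
(b) For every `x ∈ C_*` one has `J_∞(x) ≤ c_∞`. -/
theorem limsup_Kbeta_subset_Cstar_and_Cstar_below_cinf {X : Type*} [MetricSpace X]
    (F : Set (Set X)) (J : ℝ → X → EReal)
    -- each J_β, β > 0, is lower semicontinuous
    (hlsc : ∀ β : ℝ, 0 < β → LowerSemicontinuous (J β))
    -- assumption (J): monotonicity in β on (0, +∞)
    (hmono : ∀ β₁ β₂ : ℝ, 0 < β₁ → β₁ ≤ β₂ → ∀ x, J β₁ x ≤ J β₂ x)
    -- the limit functional J_∞
    (Jinf : X → EReal) (hJinf : ∀ x, Jinf x = ⨆ β : ℝ, ⨆ _ : 0 < β, J β x)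
    -- the minimax levels c_β, 0 < β < +∞, and c_∞; all of them real
    (cβ : ℝ → EReal) (hcβ : ∀ β : ℝ, cβ β = ⨅ A ∈ F, ⨆ x ∈ A, J β x)
    (cinf : ℝ) (hcinf : (⨅ A ∈ F, ⨆ x ∈ A, Jinf x) = (cinf : EReal))
    (hcreal : ∀ β : ℝ, 0 < β → ∃ r : ℝ, cβ β = (r : EReal))
    -- assumption (F2')
    (hF2' : ∀ A : ℕ → Set X, (∀ n, A n ∈ F) →
      (∃ β : ℝ, 0 < β ∧ ∀ n, ∀ x ∈ A n, J β x ≤ (cinf : EReal) + 1) →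
      SeqLimsup A ∈ F)
    -- the deformations η_β, 0 < β < +∞, mapping M_β^{c_∞+1} into itself
    (η : ℝ → X → X)
    (hηmap : ∀ β : ℝ, 0 < β → ∀ x, J β x ≤ (cinf : EReal) + 1 →
      J β (η β x) ≤ (cinf : EReal) + 1)
    -- (η2)_β
    (hη2 : ∀ β : ℝ, 0 < β → ∀ x, J β x ≤ (cinf : EReal) + 1 →
      J β (η β x) ≤ J β x)
    -- the critical sets K_β, 0 < β < +∞
    (K : ℝ → Set X)
    (hKdef : ∀ β : ℝ, K β = {x | J β x = cβ β ∧ J β (η β x) = cβ β})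
    -- the set C_*
    (Cstar : Set X)
    (hCstar : Cstar = {x | ∃ u : ℕ → X, ∃ b : ℕ → ℝ,
      (∀ n, 0 < b n) ∧ Tendsto b atTop atTop ∧ Tendsto u atTop (𝓝 x) ∧
      Tendsto (fun n => J (b n) (u n)) atTop (𝓝 (cinf : EReal)) ∧
      Tendsto (fun n => J (b n) (η (b n) (u n))) atTop (𝓝 (cinf : EReal))}) :
    (∀ b : ℕ → ℝ, (∀ n, 0 < b n) → Tendsto b atTop atTop →
      ∀ u : ℕ → X, (∀ n, u n ∈ K (b n)) →
      ∀ x : X, Tendsto u atTop (𝓝 x) → x ∈ Cstar) ∧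
    (∀ x ∈ Cstar, Jinf x ≤ (cinf : EReal)) :=
  limsup_Kbeta_subset_Cstar_and_Cstar_below_cinf_general F J hlsc hmono Jinf hJinf cβ hcβ cinf hcinf
    hF2' η K hKdef Cstar hCstar
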